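/- Let Ẋ and X̄ be real M×T matrices, L a real T×T matrix, and D, D̄ real N×T matrices with N ≤ T such that both D Dᵀ and D̄ D̄ᵀ are invertible; write D⁺ = Dᵀ (D Dᵀ)⁻¹ and D̄⁺ = D̄ᵀ (D̄ D̄ᵀ)⁻¹, and set Δ_ξ = D̄ − D and E_dif = Ẋ − X̄ L. Then the differential coefficient error ΔC_dif = Ẋ D⁺ − (X̄ L) D̄⁺ satisfies ‖ΔC_dif‖₂ ≤ ((1+√5)/2) · ‖Δ_ξ‖₂ · ‖Ẋ‖₂ · ‖D⁺‖₂ · ‖D̄⁺‖₂ + ‖E_dif‖₂ · ‖D̄⁺‖₂. -/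
import Mathlib


open Matrix

/-- The spectral norm of a real matrix. -/
noncomputable def specNorm {m n : ℕ} (A : Matrix (Fin m) (Fin n) ℝ) : ℝ :=
  ‖LinearMap.toContinuousLinearMap (Matrix.toEuclideanLin A)‖

/-- The Moore–Penrose pseudoinverse of a full-row-rank matrix `A`:
`A⁺ = Aᵀ (A Aᵀ)⁻¹`. -/
noncomputable def pinv {m k : ℕ} (A : Matrix (Fin m) (Fin k) ℝ) :
    Matrix (Fin k) (Fin m) ℝ :=
  Aᵀ * (A * Aᵀ)⁻¹

open scoped Matrix.Norms.L2Operator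

lemma specNorm_eq_l2norm {m n : ℕ} (A : Matrix (Fin m) (Fin n) ℝ) : specNorm A = ‖A‖ := rfl

section Aux
variable {m n : ℕ} (A B : Matrix (Fin m) (Fin n) ℝ)

lemma conjT : Aᴴ = Aᵀ := by ext i j; simp

lemma norm_transpose' : ‖Aᵀ‖ = ‖A‖ := by
  rw [← conjT]; exact Matrix.l2_opNorm_conjTranspose A

lemma mul_pinv (hA : IsUnit (A * Aᵀ).det) : A * pinv A = 1 := by
  rw [pinv, ← Matrix.mul_assoc, Matrix.mul_nonsing_inv _ hA]

lemma pinv_transpose : (pinv A)ᵀ = (A * Aᵀ)⁻¹ * A := by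
  rw [pinv, Matrix.transpose_mul, Matrix.transpose_transpose,
    Matrix.transpose_nonsing_inv, Matrix.transpose_mul, Matrix.transpose_transpose]

lemma pinvT_mul_pinv (hA : IsUnit (A * Aᵀ).det) : (pinv A)ᵀ * pinv A = (A * Aᵀ)⁻¹ := by
  rw [pinv_transpose, pinv, Matrix.mul_assoc, ← Matrix.mul_assoc A,
    Matrix.mul_nonsing_inv _ hA, Matrix.mul_one]

-- Pythagoras
lemma norm_add_sq_le' (M N : Matrix (Fin m) (Fin n) ℝ) (h : Mᵀ * N = 0) :
    ‖M + N‖ ^ 2 ≤ ‖M‖ ^ 2 + ‖N‖ ^ 2 := by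
  have h' : Nᵀ * M = 0 := by
    have := congrArg Matrix.transpose h
    simpa [Matrix.transpose_mul] using this
  have key : (M + N)ᴴ * (M + N) = Mᴴ * M + Nᴴ * N := by
    simp only [conjT, Matrix.transpose_add, Matrix.add_mul, Matrix.mul_add, h, h']
    abel
  calc ‖M + N‖ ^ 2 = ‖(M + N)ᴴ * (M + N)‖ := by
        rw [Matrix.l2_opNorm_conjTranspose_mul_self]; ring
    _ = ‖Mᴴ * M + Nᴴ * N‖ := by rw [key]
    _ ≤ ‖Mᴴ * M‖ + ‖Nᴴ * N‖ := norm_add_le _ _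
    _ = ‖M‖ ^ 2 + ‖N‖ ^ 2 := by
        rw [Matrix.l2_opNorm_conjTranspose_mul_self, Matrix.l2_opNorm_conjTranspose_mul_self]; ring

lemma proj_norm_le_one (P : Matrix (Fin n) (Fin n) ℝ) (hsym : Pᵀ = P) (hidem : P * P = P) :
    ‖P‖ ≤ 1 := by
  have h2 : ‖P‖ * ‖P‖ = ‖P‖ := by
    conv_rhs => rw [← hidem]
    conv_rhs => rw [show P * P = Pᴴ * P by rw [conjT, hsym]]
    rw [Matrix.l2_opNorm_conjTranspose_mul_self]
  nlinarith [norm_nonneg P]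

end Aux

section Stewart
variable {m n : ℕ}

lemma proj_facts (B : Matrix (Fin m) (Fin n) ℝ) (hB : IsUnit (B * Bᵀ).det) :
    ((1 : Matrix (Fin n) (Fin n) ℝ) - pinv B * B)ᵀ = 1 - pinv B * B ∧
    ((1 : Matrix (Fin n) (Fin n) ℝ) - pinv B * B) * (1 - pinv B * B) = 1 - pinv B * B ∧
    ((1 : Matrix (Fin n) (Fin n) ℝ) - pinv B * B) * Bᵀ = 0 := by
  have hBB : B * pinv B = 1 := mul_pinv B hB
  have hsym : (pinv B * B)ᵀ = pinv B * B := by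
    rw [Matrix.transpose_mul, pinv_transpose, pinv, Matrix.mul_assoc]
  have hidem : (pinv B * B) * (pinv B * B) = pinv B * B := by
    rw [Matrix.mul_assoc, ← Matrix.mul_assoc B, hBB, Matrix.one_mul]
  have hBt : (pinv B * B) * Bᵀ = Bᵀ := by
    rw [pinv, Matrix.mul_assoc, Matrix.mul_assoc, Matrix.nonsing_inv_mul _ hB,
      Matrix.mul_one]
  refine ⟨?_, ?_, ?_⟩
  · rw [Matrix.transpose_sub, Matrix.transpose_one, hsym]
  · simp only [Matrix.sub_mul, Matrix.mul_sub, Matrix.one_mul, Matrix.mul_one, hidem]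
    abel
  · rw [Matrix.sub_mul, Matrix.one_mul, hBt, sub_self]

lemma stewart_one (A B : Matrix (Fin m) (Fin n) ℝ)
    (hA : IsUnit (A * Aᵀ).det) (hB : IsUnit (B * Bᵀ).det) :
    ‖pinv B - pinv A‖ ^ 2 ≤
      ‖B - A‖ ^ 2 * ‖pinv A‖ ^ 2 * (‖pinv B‖ ^ 2 + ‖pinv A‖ ^ 2) := by
  obtain ⟨hPsym, hPidem, hPBt⟩ := proj_facts B hB
  set P : Matrix (Fin n) (Fin n) ℝ := 1 - pinv B * B with hP
  set T1 : Matrix (Fin n) (Fin m) ℝ := -(pinv B * (B - A) * pinv A) with hT1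
  set T2 : Matrix (Fin n) (Fin m) ℝ := -(P * pinv A) with hT2
  have hAA : A * pinv A = 1 := mul_pinv A hA
  -- decomposition identity
  have hid : pinv B - pinv A = T1 + T2 := by
    have e1 : pinv B * (A * pinv A) = pinv B := by rw [hAA, Matrix.mul_one]
    simp only [hT1, hT2, hP, Matrix.mul_sub, Matrix.sub_mul, Matrix.one_mul, Matrix.mul_assoc]
    rw [e1]
    abel
  -- orthogonality: T1ᵀ * T2 = 0
  have horth : T1ᵀ * T2 = 0 := by
    have e2 : (pinv B)ᵀ * P = 0 := by
      have hBP : B * P = 0 := by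
        have := congrArg Matrix.transpose hPBt
        simpa [Matrix.transpose_mul, hPsym] using this
      rw [pinv_transpose, Matrix.mul_assoc, hBP, Matrix.mul_zero]
    rw [hT1, hT2, Matrix.transpose_neg, Matrix.neg_mul, Matrix.mul_neg, neg_neg,
      Matrix.transpose_mul, Matrix.transpose_mul, Matrix.mul_assoc, Matrix.mul_assoc,
      ← Matrix.mul_assoc ((pinv B)ᵀ), e2, Matrix.zero_mul, Matrix.mul_zero, Matrix.mul_zero]
  -- norm bounds
  have hnT1 : ‖T1‖ ≤ ‖pinv B‖ * ‖B - A‖ * ‖pinv A‖ := by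
    rw [hT1, norm_neg]
    calc ‖pinv B * (B - A) * pinv A‖ ≤ ‖pinv B * (B - A)‖ * ‖pinv A‖ :=
          Matrix.l2_opNorm_mul _ _
      _ ≤ ‖pinv B‖ * ‖B - A‖ * ‖pinv A‖ :=
          mul_le_mul_of_nonneg_right (Matrix.l2_opNorm_mul _ _) (norm_nonneg _)
  have hnT2 : ‖T2‖ ≤ ‖B - A‖ * ‖pinv A‖ ^ 2 := by
    have hPA : P * pinv A = -(P * (B - A)ᵀ * ((pinv A)ᵀ * pinv A)) := by
      rw [pinvT_mul_pinv A hA]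
      have e3 : P * (B - A)ᵀ = -(P * Aᵀ) := by
        rw [Matrix.transpose_sub, Matrix.mul_sub, hPBt, zero_sub]
      rw [e3, Matrix.neg_mul, neg_neg]
      rw [pinv, ← Matrix.mul_assoc]
    have hnP : ‖P‖ ≤ 1 := proj_norm_le_one P hPsym hPidem
    rw [hT2, norm_neg, hPA, norm_neg]
    calc ‖P * (B - A)ᵀ * ((pinv A)ᵀ * pinv A)‖
        ≤ ‖P * (B - A)ᵀ‖ * ‖(pinv A)ᵀ * pinv A‖ := Matrix.l2_opNorm_mul _ _
      _ ≤ (‖P‖ * ‖(B - A)ᵀ‖) * (‖(pinv A)ᵀ‖ * ‖pinv A‖) :=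
          mul_le_mul (Matrix.l2_opNorm_mul _ _) (Matrix.l2_opNorm_mul _ _)
            (norm_nonneg _) (by positivity)
      _ ≤ ‖B - A‖ * ‖pinv A‖ ^ 2 := by
          rw [norm_transpose', norm_transpose']
          have h0 : (0:ℝ) ≤ ‖B - A‖ * (‖pinv A‖ * ‖pinv A‖) := by positivity
          nlinarith [mul_le_mul_of_nonneg_right hnP h0]
  have hpyth : ‖T1 + T2‖ ^ 2 ≤ ‖T1‖ ^ 2 + ‖T2‖ ^ 2 := norm_add_sq_le' T1 T2 horth
  rw [hid]
  nlinarith [hnT1, hnT2, norm_nonneg T1, norm_nonneg T2, norm_nonneg (pinv A),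
    norm_nonneg (pinv B), norm_nonneg (B - A), hpyth]

end Stewart

set_option maxHeartbeats 1000000 in
lemma stewart {m n : ℕ} (A B : Matrix (Fin m) (Fin n) ℝ)
    (hA : IsUnit (A * Aᵀ).det) (hB : IsUnit (B * Bᵀ).det) :
    ‖pinv B - pinv A‖ ≤
      (1 + Real.sqrt 5) / 2 * ‖B - A‖ * ‖pinv A‖ * ‖pinv B‖ := by
  have h1 := stewart_one A B hA hB
  have h2 := stewart_one B A hB hA
  rw [norm_sub_rev (pinv A), norm_sub_rev A] at h2
  set η := ‖pinv B - pinv A‖ with hηd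
  set δ := ‖B - A‖ with hδd
  set α := ‖pinv A‖ with hαd
  set β := ‖pinv B‖ with hβd
  have hη : 0 ≤ η := norm_nonneg _
  have hδ : 0 ≤ δ := norm_nonneg _
  have hα : 0 ≤ α := norm_nonneg _
  have hβ : 0 ≤ β := norm_nonneg _
  have hsq : η ^ 2 ≤ 2 * (δ * α * β) ^ 2 := by
    rcases le_total α β with hab | hab
    · nlinarith [mul_le_mul_of_nonneg_left (mul_self_le_mul_self hα hab) (sq_nonneg δ)]
    · nlinarith [mul_le_mul_of_nonneg_left (mul_self_le_mul_self hβ hab) (sq_nonneg δ)]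
  have hs5 : Real.sqrt 5 ^ 2 = 5 := Real.sq_sqrt (by norm_num)
  have hs5n : (0:ℝ) ≤ Real.sqrt 5 := Real.sqrt_nonneg 5
  have hphi : (2:ℝ) ≤ ((1 + Real.sqrt 5) / 2) ^ 2 := by nlinarith
  have h3 : η ^ 2 ≤ ((1 + Real.sqrt 5) / 2 * δ * α * β) ^ 2 := by
    have e : ((1 + Real.sqrt 5) / 2 * δ * α * β) ^ 2
        = ((1 + Real.sqrt 5) / 2) ^ 2 * (δ * α * β) ^ 2 := by ring
    rw [e]
    nlinarith [sq_nonneg (δ * α * β)]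
  have hb : 0 ≤ (1 + Real.sqrt 5) / 2 * δ * α * β := by positivity
  calc η = Real.sqrt (η ^ 2) := (Real.sqrt_sq hη).symm
    _ ≤ Real.sqrt (((1 + Real.sqrt 5) / 2 * δ * α * β) ^ 2) := Real.sqrt_le_sqrt h3
    _ = (1 + Real.sqrt 5) / 2 * δ * α * β := Real.sqrt_sq hb

/-- Differential part of Theorem 3.4: spectral-norm bound on the differential
coefficient error `ΔC_dif = Ẋ D⁺ - (X̄ L) D̄⁺`. -/
theorem diff_coefficient_error_bound {M N T : ℕ} (hNT : N ≤ T)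
    (Xdot Xbar : Matrix (Fin M) (Fin T) ℝ)
    (L : Matrix (Fin T) (Fin T) ℝ)
    (D Dbar : Matrix (Fin N) (Fin T) ℝ)
    (hD : IsUnit (D * Dᵀ).det) (hDbar : IsUnit (Dbar * Dbarᵀ).det) :
    specNorm (Xdot * pinv D - (Xbar * L) * pinv Dbar) ≤
      (1 + Real.sqrt 5) / 2 * specNorm (Dbar - D) * specNorm Xdot *
          specNorm (pinv D) * specNorm (pinv Dbar) +
        specNorm (Xdot - Xbar * L) * specNorm (pinv Dbar) := by
  simp only [specNorm_eq_l2norm]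
  have hdec : Xdot * pinv D - (Xbar * L) * pinv Dbar
      = Xdot * (pinv D - pinv Dbar) + (Xdot - Xbar * L) * pinv Dbar := by
    rw [Matrix.mul_sub, Matrix.sub_mul]; abel
  have h1 : ‖Xdot * pinv D - (Xbar * L) * pinv Dbar‖
      ≤ ‖Xdot‖ * ‖pinv D - pinv Dbar‖ + ‖Xdot - Xbar * L‖ * ‖pinv Dbar‖ := by
    rw [hdec]
    exact (norm_add_le _ _).trans
      (add_le_add (Matrix.l2_opNorm_mul _ _) (Matrix.l2_opNorm_mul _ _))
  have h2 : ‖pinv D - pinv Dbar‖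
      ≤ (1 + Real.sqrt 5) / 2 * ‖Dbar - D‖ * ‖pinv D‖ * ‖pinv Dbar‖ := by
    rw [norm_sub_rev]
    exact stewart D Dbar hD hDbar
  have h3 := mul_le_mul_of_nonneg_left h2 (norm_nonneg Xdot)
  linarith [h1, h3]
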